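/- Let e_α := (−sin α, cos α), J(x,y) = (−y,x), let p : ℝ → ℝ be a C³ function with p(α + π) = p(α) for all α, and define γ(α) := p'(α)e_α − p(α)Je_α and A := (1/2)∫₀^{2π} p(α)(p''(α) + p(α)) dα. Then ∬_{[0,π]²} [ω(γ''(α₁),γ(α₂)) + ω(γ(α₁),γ''(α₂))] · ω(γ'(α₁),γ'(α₂)) dα₁dα₂ = −A · ∫₀^π (p''(α) + p(α))² dα. -/

import Mathlib

/-!
Let `γ` be a `C²` curve with `γ b = -γ a` and `γ' b = -γ' a`, and fix vectors `u, v, w`. The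
function `G = ω(w,γ) ω(v,γ) + ω(u,γ') ω(v,γ')` takes the same value at `a` and `b`, and by the
Plücker relation for `2 × 2` determinants
`G' = 2 (ω(w,γ) + ω(u,γ'')) ω(v,γ') + ω(w,v) ω(γ',γ) + ω(u,v) ω(γ',γ'')`.
Integrating in `α₂` with `(u, v, w) = (γ, γ', γ'')(α₁)` and then in `α₁` shows that the double
integral equals `(∫ ω(γ',γ)) (∫ ω(γ',γ''))`.

For the curve with support function `p` we have `γ' = (p'' + p) e`, hence `ω(γ',γ) = -p (p'' + p)`
and `ω(γ',γ'') = (p'' + p)²`; `π`-periodicity of `p` makes `γ` antiperiodic and halves the integral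
defining `A`.
-/

open Real

/-- The standard area form (determinant) on `ℝ²`. -/
def omega2 (u v : ℝ × ℝ) : ℝ := u.1 * v.2 - u.2 * v.1

/-- The unit vector forming an angle `α` with the vertical direction `(0,1)`. -/
noncomputable def eVec (α : ℝ) : ℝ × ℝ := (-Real.sin α, Real.cos α)

/-- Rotation by `π/2` in the positive direction. -/
def Jrot (v : ℝ × ℝ) : ℝ × ℝ := (-v.2, v.1)

open Function

section Periodic

variable {𝕜 F : Type*} [NontriviallyNormedField 𝕜] [NormedAddCommGroup F] [NormedSpace 𝕜 F]
  {f : 𝕜 → F} {c : 𝕜}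

theorem Function.Periodic.deriv (h : Periodic f c) : Periodic (deriv f) c := fun x => by
  rw [← deriv_comp_add_const, show (fun x => f (x + c)) = f from funext h]

theorem Function.Antiperiodic.deriv (h : Antiperiodic f c) : Antiperiodic (deriv f) c := fun x => by
  rw [← deriv_comp_add_const, show (fun x => f (x + c)) = -f from funext h, deriv.neg]

end Periodic

theorem Function.Periodic.intervalIntegral_zero_two_mul {f : ℝ → ℝ} {T : ℝ} (h : Periodic f T)
    (hf : Continuous f) : ∫ x in 0..2 * T, f x = 2 * ∫ x in 0..T, f x := by
  rw [two_mul, h.intervalIntegral_add_eq_add 0 T fun _ _ => hf.intervalIntegrable _ _, zero_add]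
  ring

theorem omega2_anticomm (u v : ℝ × ℝ) : omega2 v u = -omega2 u v := by
  simp only [omega2]; ring

@[fun_prop]
theorem Continuous.omega2 {f g : ℝ → ℝ × ℝ} (hf : Continuous f) (hg : Continuous g) :
    Continuous fun t => omega2 (f t) (g t) := by
  unfold _root_.omega2; fun_prop

theorem HasDerivAt.omega2 {f g : ℝ → ℝ × ℝ} {f' g' : ℝ × ℝ} {t : ℝ}
    (hf : HasDerivAt f f' t) (hg : HasDerivAt g g' t) :
    HasDerivAt (fun s => omega2 (f s) (g s)) (omega2 f' (g t) + omega2 (f t) g') t := by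
  have hf₁ : HasDerivAt (fun s => (f s).1) f'.1 t :=
    (ContinuousLinearMap.fst ℝ ℝ ℝ).hasFDerivAt.comp_hasDerivAt t hf
  have hf₂ : HasDerivAt (fun s => (f s).2) f'.2 t :=
    (ContinuousLinearMap.snd ℝ ℝ ℝ).hasFDerivAt.comp_hasDerivAt t hf
  have hg₁ : HasDerivAt (fun s => (g s).1) g'.1 t :=
    (ContinuousLinearMap.fst ℝ ℝ ℝ).hasFDerivAt.comp_hasDerivAt t hg
  have hg₂ : HasDerivAt (fun s => (g s).2) g'.2 t :=
    (ContinuousLinearMap.snd ℝ ℝ ℝ).hasFDerivAt.comp_hasDerivAt t hg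
  exact ((hf₁.mul hg₂).sub (hf₂.mul hg₁)).congr_deriv (by simp only [_root_.omega2]; ring)

section AntiperiodicCurve

variable {γ : ℝ → ℝ × ℝ} {a b : ℝ}

theorem integral_omega2_add_omega2_mul_omega2 (hγ : ContDiff ℝ 2 γ)
    (hγb : γ b = -γ a) (hγ'b : deriv γ b = -deriv γ a) (u v w : ℝ × ℝ) :
    ∫ t in a..b, (omega2 w (γ t) + omega2 u (deriv (deriv γ) t)) * omega2 v (deriv γ t) =
      -(omega2 w v * (∫ t in a..b, omega2 (deriv γ t) (γ t)) +
        omega2 u v * ∫ t in a..b, omega2 (deriv γ t) (deriv (deriv γ) t)) / 2 := by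
  set γ' := deriv γ
  set γ'' := deriv γ'
  have hγ' : ∀ t, HasDerivAt γ (γ' t) t := fun t => (hγ.differentiable (by norm_num) t).hasDerivAt
  have hγ'' : ∀ t, HasDerivAt γ' (γ'' t) t := fun t => (hγ.differentiable_deriv_two t).hasDerivAt
  have hc : Continuous γ := hγ.continuous
  have hc' : Continuous γ' := hγ.continuous_deriv (by norm_num)
  have hc'' : Continuous γ'' := (hγ.deriv' (n := 1)).continuous_deriv_one
  set G : ℝ → ℝ := fun t => omega2 w (γ t) * omega2 v (γ t) + omega2 u (γ' t) * omega2 v (γ' t)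
  have hG : ∀ t, HasDerivAt G (2 * ((omega2 w (γ t) + omega2 u (γ'' t)) * omega2 v (γ' t)) +
      (omega2 w v * omega2 (γ' t) (γ t) + omega2 u v * omega2 (γ' t) (γ'' t))) t := fun t => by
    have hw := (hasDerivAt_const t w).omega2 (hγ' t)
    have hv := (hasDerivAt_const t v).omega2 (hγ' t)
    have hu' := (hasDerivAt_const t u).omega2 (hγ'' t)
    have hv' := (hasDerivAt_const t v).omega2 (hγ'' t)
    exact ((hw.mul hv).add (hu'.mul hv')).congr_deriv
      (by simp only [omega2, Prod.fst_zero, Prod.snd_zero]; ring)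
  have hGab : G b = G a := by simp only [G, hγb, hγ'b, omega2, Prod.fst_neg, Prod.snd_neg]; ring
  have hint {f : ℝ → ℝ} (hf : Continuous f) : IntervalIntegrable f MeasureTheory.volume a b :=
    hf.intervalIntegrable a b
  have hFTC := intervalIntegral.integral_eq_sub_of_hasDerivAt (fun t _ => hG t) (hint (by fun_prop))
  rw [hGab, sub_self, intervalIntegral.integral_add (hint (by fun_prop)) (hint (by fun_prop)),
    intervalIntegral.integral_add (hint (by fun_prop)) (hint (by fun_prop)),
    intervalIntegral.integral_const_mul, intervalIntegral.integral_const_mul,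
    intervalIntegral.integral_const_mul] at hFTC
  linarith

theorem integral_integral_omega2_add_omega2_mul_omega2 (hγ : ContDiff ℝ 2 γ)
    (hγb : γ b = -γ a) (hγ'b : deriv γ b = -deriv γ a) :
    ∫ s in a..b, ∫ t in a..b,
        (omega2 (deriv (deriv γ) s) (γ t) + omega2 (γ s) (deriv (deriv γ) t)) *
          omega2 (deriv γ s) (deriv γ t) =
      (∫ t in a..b, omega2 (deriv γ t) (γ t)) *
        ∫ t in a..b, omega2 (deriv γ t) (deriv (deriv γ) t) := by
  set I₁ := ∫ t in a..b, omega2 (deriv γ t) (γ t)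
  set I₂ := ∫ t in a..b, omega2 (deriv γ t) (deriv (deriv γ) t)
  have hc : Continuous γ := hγ.continuous
  have hc' : Continuous (deriv γ) := hγ.continuous_deriv (by norm_num)
  have hc'' : Continuous (deriv (deriv γ)) := (hγ.deriv' (n := 1)).continuous_deriv_one
  have hinner : ∀ s ∈ Set.uIcc a b, ∫ t in a..b,
      (omega2 (deriv (deriv γ) s) (γ t) + omega2 (γ s) (deriv (deriv γ) t)) *
        omega2 (deriv γ s) (deriv γ t) =
      (omega2 (deriv γ s) (deriv (deriv γ) s) * I₁ + omega2 (deriv γ s) (γ s) * I₂) / 2 := by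
    intro s _
    rw [integral_omega2_add_omega2_mul_omega2 hγ hγb hγ'b, omega2_anticomm (deriv γ s),
      omega2_anticomm (deriv γ s)]
    ring
  rw [intervalIntegral.integral_congr hinner, intervalIntegral.integral_div,
    intervalIntegral.integral_add ((by fun_prop : Continuous _).intervalIntegrable a b)
      ((by fun_prop : Continuous _).intervalIntegrable a b),
    intervalIntegral.integral_mul_const, intervalIntegral.integral_mul_const]
  ring

end AntiperiodicCurve

theorem hasDerivAt_eVec (α : ℝ) : HasDerivAt eVec (Jrot (eVec α)) α :=
  (hasDerivAt_sin α).neg.prodMk (hasDerivAt_cos α)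

theorem hasDerivAt_Jrot_eVec (α : ℝ) : HasDerivAt (fun β => Jrot (eVec β)) (-eVec α) α :=
  ((hasDerivAt_cos α).neg.prodMk (hasDerivAt_sin α).neg).congr_deriv (by simp [eVec])

theorem contDiff_eVec {n : WithTop ℕ∞} : ContDiff ℝ n eVec :=
  contDiff_sin.neg.prodMk contDiff_cos

theorem contDiff_Jrot_eVec {n : WithTop ℕ∞} : ContDiff ℝ n fun α => Jrot (eVec α) :=
  contDiff_cos.neg.prodMk contDiff_sin.neg

theorem antiperiodic_eVec : Antiperiodic eVec π := fun α => by
  simp [eVec, sin_add_pi, cos_add_pi]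

theorem Jrot_neg (v : ℝ × ℝ) : Jrot (-v) = -Jrot v := rfl

noncomputable def supportCurve (p : ℝ → ℝ) (α : ℝ) : ℝ × ℝ :=
  deriv p α • eVec α - p α • Jrot (eVec α)

section SupportCurve

variable {p : ℝ → ℝ}

theorem hasDerivAt_supportCurve {α : ℝ} (hp : DifferentiableAt ℝ p α)
    (hp' : DifferentiableAt ℝ (deriv p) α) :
    HasDerivAt (supportCurve p) ((deriv (deriv p) α + p α) • eVec α) α :=
  ((hp'.hasDerivAt.smul (hasDerivAt_eVec α)).sub
    (hp.hasDerivAt.smul (hasDerivAt_Jrot_eVec α))).congr_deriv (by module)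

theorem deriv_supportCurve (hp : Differentiable ℝ p) (hp' : Differentiable ℝ (deriv p)) :
    deriv (supportCurve p) = fun α => (deriv (deriv p) α + p α) • eVec α :=
  funext fun α => (hasDerivAt_supportCurve (hp α) (hp' α)).deriv

theorem contDiff_supportCurve {n : WithTop ℕ∞} (hp : ContDiff ℝ (n + 1) p) :
    ContDiff ℝ n (supportCurve p) :=
  (hp.deriv'.smul contDiff_eVec).sub ((hp.of_le le_self_add).smul contDiff_Jrot_eVec)

theorem antiperiodic_supportCurve (hper : Periodic p π) : Antiperiodic (supportCurve p) π :=
  fun α => by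
    simp only [supportCurve, hper α, hper.deriv α, antiperiodic_eVec α, Jrot_neg, smul_neg]
    abel

theorem omega2_deriv_supportCurve_supportCurve (hp : Differentiable ℝ p)
    (hp' : Differentiable ℝ (deriv p)) (α : ℝ) :
    omega2 (deriv (supportCurve p) α) (supportCurve p α) = -(p α * (deriv (deriv p) α + p α)) := by
  rw [deriv_supportCurve hp hp']
  simp only [supportCurve, omega2, eVec, Jrot, Prod.smul_mk, smul_eq_mul, Prod.fst_sub,
    Prod.snd_sub]
  linear_combination -(p α * (deriv (deriv p) α + p α)) * sin_sq_add_cos_sq α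

theorem omega2_deriv_supportCurve_deriv_deriv (hp : Differentiable ℝ p)
    (hp' : Differentiable ℝ (deriv p)) (hp'' : Differentiable ℝ (deriv (deriv p))) (α : ℝ) :
    omega2 (deriv (supportCurve p) α) (deriv (deriv (supportCurve p)) α) =
      (deriv (deriv p) α + p α) ^ 2 := by
  have hρ : HasDerivAt (fun β => deriv (deriv p) β + p β)
      (deriv (deriv (deriv p)) α + deriv p α) α :=
    (hp'' α).hasDerivAt.add (hp α).hasDerivAt
  have hγ' : HasDerivAt (fun β => (deriv (deriv p) β + p β) • eVec β)
      ((deriv (deriv p) α + p α) • Jrot (eVec α) +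
        (deriv (deriv (deriv p)) α + deriv p α) • eVec α) α :=
    hρ.smul (hasDerivAt_eVec α)
  rw [deriv_supportCurve hp hp', hγ'.deriv]
  simp only [omega2, eVec, Jrot, Prod.smul_mk, smul_eq_mul, Prod.fst_add, Prod.snd_add]
  linear_combination (deriv (deriv p) α + p α) ^ 2 * sin_sq_add_cos_sq α

end SupportCurve

theorem stmt_10 (p : ℝ → ℝ) (hp : ContDiff ℝ 3 p)
    (hper : ∀ α : ℝ, p (α + π) = p α)
    (γ : ℝ → ℝ × ℝ)
    (hγ : ∀ α : ℝ, γ α = deriv p α • eVec α - p α • Jrot (eVec α))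
    (A : ℝ)
    (hA : A = (1 / 2) * ∫ α in (0:ℝ)..(2 * π), p α * (deriv (deriv p) α + p α)) :
    (∫ α₁ in (0:ℝ)..π, ∫ α₂ in (0:ℝ)..π,
        (omega2 (deriv (deriv γ) α₁) (γ α₂) + omega2 (γ α₁) (deriv (deriv γ) α₂)) *
          omega2 (deriv γ α₁) (deriv γ α₂)) =
      -A * ∫ α in (0:ℝ)..π, (deriv (deriv p) α + p α) ^ 2 := by
  obtain rfl : γ = supportCurve p := funext hγ
  have hper : Periodic p π := hper
  have hp₀ : Differentiable ℝ p := hp.differentiable (by norm_num)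
  have hp₁ : Differentiable ℝ (deriv p) := (hp.deriv' (n := 2)).differentiable (by norm_num)
  have hp₂ : Differentiable ℝ (deriv (deriv p)) := (hp.deriv' (n := 2)).differentiable_deriv_two
  have hanti := antiperiodic_supportCurve hper
  have hperA : Periodic (fun α => p α * (deriv (deriv p) α + p α)) π :=
    hper.mul (hper.deriv.deriv.add hper)
  rw [integral_integral_omega2_add_omega2_mul_omega2 (contDiff_supportCurve hp) hanti.eq
    hanti.deriv.eq, hA, hperA.intervalIntegral_zero_two_mul
      (hp₀.continuous.mul (hp₂.continuous.add hp₀.continuous))]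
  simp only [omega2_deriv_supportCurve_supportCurve hp₀ hp₁,
    omega2_deriv_supportCurve_deriv_deriv hp₀ hp₁ hp₂, intervalIntegral.integral_neg]
  ring
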